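/- Let X̃, Ỹ ∈ ℝ^{M×N} with K_X = X̃ X̃ᵀ ≠ Ỹ Ỹᵀ = K_Y, and set α = Tr K_X, β = Tr K_Y, D = ‖K_X − K_Y‖_F², and R_Δ = R(K_X − K_Y) = ‖K_X − K_Y‖_*²/‖K_X − K_Y‖_F². Let P(X̃, Ỹ) = min over orthogonal N×N matrices R of ‖X̃ − Ỹ R‖_F be the Procrustes distance. Then (α + β) − √((α + β)² − R_Δ D) ≤ P(X̃, Ỹ)² ≤ √(R_Δ D); equivalently, (1/R_Δ) P(X̃, Ỹ)⁴ ≤ D ≤ (2(α + β) P(X̃, Ỹ)² − P(X̃, Ỹ)⁴)/R_Δ. -/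

import Mathlib

open Matrix

/-- The nuclear norm (sum of singular values) of a real matrix, where the singular values are
the square roots of the eigenvalues of `Aᵀ A`. -/
noncomputable def nuclearNorm {m n : Type*} [Fintype m] [Fintype n] [DecidableEq n]
    (A : Matrix m n ℝ) : ℝ :=
  ∑ i, Real.sqrt ((Matrix.isHermitian_conjTranspose_mul_self A).eigenvalues i)

/-- The squared Frobenius norm of a real matrix. -/
def frobSq {m n : Type*} [Fintype m] [Fintype n] (A : Matrix m n ℝ) : ℝ :=
  ∑ i, ∑ j, A i j ^ 2

/-- The Procrustes shape distance `P(X̃, Ỹ) = min_{R ∈ O(N)} ‖X̃ − Ỹ R‖_F` between two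
representations of matching dimensions. -/
noncomputable def procrustesDist {M N : ℕ} (Xt Yt : Matrix (Fin M) (Fin N) ℝ) : ℝ :=
  sInf {d : ℝ | ∃ R ∈ Matrix.orthogonalGroup (Fin N) ℝ,
    d = Real.sqrt (frobSq (Xt - Yt * R))}

/-!
The infimum defining `P` is attained: by the trace duality `‖C‖_* = max_{Q ∈ O(n)} tr (Q C)`
(a polar decomposition), `P² = α + β - 2 ‖Ỹᵀ X̃‖_*`.

Upper bound: `‖Ỹᵀ X̃‖_* ≥ tr (K_X^{1/2} K_Y^{1/2})`, hence `P² ≤ ‖K_X^{1/2} - K_Y^{1/2}‖_F²`,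
which the Powers–Størmer inequality bounds by `‖K_X - K_Y‖_*`.

Lower bound: for an optimal rotation `R`, `Z = Ỹ R` satisfies `Z Zᵀ = K_Y`, and
`2 (K_X - K_Y) = (X̃ + Z)(X̃ - Z)ᵀ + (X̃ - Z)(X̃ + Z)ᵀ`. Trace duality and Cauchy–Schwarz give
`‖K_X - K_Y‖_* ≤ ‖X̃ + Z‖_F ‖X̃ - Z‖_F`, and the parallelogram law turns this into
`‖K_X - K_Y‖_*² ≤ P² (2 (α + β) - P²)`.

As `R_Δ D = ‖K_X - K_Y‖_*²`, the claimed bounds are these two inequalities solved for `P²`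
and for `D`.
-/

lemma transpose_eq_self_of_isHermitian {n : Type*} {S : Matrix n n ℝ} (hS : S.IsHermitian) :
    Sᵀ = S :=
  (conjTranspose_eq_transpose_of_trivial S).symm.trans hS

lemma transpose_mul_apply_self_le {m n : Type*} [Fintype m] (A B : Matrix m n ℝ) (i : n) :
    (Aᵀ * B) i i ≤ √((Aᵀ * A) i i) * √((Bᵀ * B) i i) := by
  simp only [mul_apply, transpose_apply, ← sq]
  exact Real.sum_mul_le_sqrt_mul_sqrt _ _ _

lemma mul_mul_transpose_orthogonal {m n : Type*} [Fintype n] [DecidableEq n] (A : Matrix m n ℝ)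
    {R : Matrix n n ℝ} (hR : R ∈ orthogonalGroup n ℝ) : A * R * (A * R)ᵀ = A * Aᵀ := by
  rw [transpose_mul, Matrix.mul_assoc, ← Matrix.mul_assoc R, (mem_orthogonalGroup_iff n ℝ).mp hR,
    Matrix.one_mul]

section Frobenius

variable {m n : Type*} [Fintype m] [Fintype n]

lemma frobSq_nonneg (A : Matrix m n ℝ) : 0 ≤ frobSq A := by
  unfold frobSq
  positivity

lemma frobSq_eq_trace_mul_transpose (A : Matrix m n ℝ) : frobSq A = (A * Aᵀ).trace := by
  simp [frobSq, trace, mul_apply, sq]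

lemma frobSq_eq_trace_transpose_mul (A : Matrix m n ℝ) : frobSq A = (Aᵀ * A).trace := by
  rw [frobSq_eq_trace_mul_transpose, trace_mul_comm]

lemma frobSq_pos {A : Matrix m n ℝ} (hA : A ≠ 0) : 0 < frobSq A := by
  rw [frobSq_eq_trace_transpose_mul, ← conjTranspose_eq_transpose_of_trivial]
  exact (posSemidef_conjTranspose_mul_self A).trace_nonneg.lt_of_ne'
    (trace_conjTranspose_mul_self_eq_zero_iff.not.mpr hA)

lemma frobSq_eq_of_mul_self_eq {S : Matrix m m ℝ} {A : Matrix m n ℝ} (hS : S.IsHermitian)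
    (hSS : S * S = A * Aᵀ) : frobSq S = frobSq A := by
  rw [frobSq_eq_trace_mul_transpose, frobSq_eq_trace_mul_transpose,
    transpose_eq_self_of_isHermitian hS, hSS]

lemma trace_mul_transpose_comm (A B : Matrix m n ℝ) : (B * Aᵀ).trace = (A * Bᵀ).trace := by
  rw [← trace_transpose, transpose_mul, transpose_transpose]

lemma frobSq_add (A B : Matrix m n ℝ) :
    frobSq (A + B) = frobSq A + frobSq B + 2 * (A * Bᵀ).trace := by
  simp only [frobSq_eq_trace_mul_transpose, transpose_add, Matrix.add_mul, Matrix.mul_add,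
    trace_add, trace_mul_transpose_comm A B]
  ring

lemma frobSq_sub (A B : Matrix m n ℝ) :
    frobSq (A - B) = frobSq A + frobSq B - 2 * (A * Bᵀ).trace := by
  simp only [frobSq_eq_trace_mul_transpose, transpose_sub, Matrix.sub_mul, Matrix.mul_sub,
    trace_sub, trace_mul_transpose_comm A B]
  ring

lemma trace_mul_transpose_le (A B : Matrix m n ℝ) :
    (A * Bᵀ).trace ≤ √(frobSq A) * √(frobSq B) := by
  simp only [trace, diag, mul_apply, transpose_apply, frobSq, ← Fintype.sum_prod_type']
  exact Real.sum_mul_le_sqrt_mul_sqrt _ _ _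

lemma frobSq_mul_orthogonal [DecidableEq n] (A : Matrix m n ℝ) {R : Matrix n n ℝ}
    (hR : R ∈ orthogonalGroup n ℝ) : frobSq (A * R) = frobSq A := by
  rw [frobSq_eq_trace_mul_transpose, frobSq_eq_trace_mul_transpose,
    mul_mul_transpose_orthogonal A hR]

lemma frobSq_orthogonal_mul [DecidableEq m] (A : Matrix m n ℝ) {Q : Matrix m m ℝ}
    (hQ : Q ∈ orthogonalGroup m ℝ) : frobSq (Q * A) = frobSq A := by
  rw [frobSq_eq_trace_transpose_mul, frobSq_eq_trace_transpose_mul, transpose_mul,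
    Matrix.mul_assoc, ← Matrix.mul_assoc Qᵀ, (mem_orthogonalGroup_iff' m ℝ).mp hQ, Matrix.one_mul]

lemma frobSq_sub_mul_orthogonal [DecidableEq n] (A B : Matrix m n ℝ) {R : Matrix n n ℝ}
    (hR : R ∈ orthogonalGroup n ℝ) :
    frobSq (A - B * R) = frobSq A + frobSq B - 2 * (Rᵀ * (Bᵀ * A)).trace := by
  rw [frobSq_sub, frobSq_mul_orthogonal B hR, transpose_mul, trace_mul_comm, Matrix.mul_assoc]

end Frobenius

lemma Matrix.IsHermitian.transpose_eigenvectorUnitary_mul_mul {n : Type*} [Fintype n]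
    [DecidableEq n] {C : Matrix n n ℝ} (hC : C.IsHermitian) :
    (hC.eigenvectorUnitary : Matrix n n ℝ)ᵀ * C * hC.eigenvectorUnitary =
      diagonal hC.eigenvalues := by
  have h := hC.conjStarAlgAut_star_eigenvectorUnitary
  rw [Unitary.conjStarAlgAut_apply, Unitary.coe_star, star_star] at h
  simpa [star_eq_conjTranspose] using h

section NuclearNorm

variable {m n : Type*} [Fintype m] [Fintype n] [DecidableEq n]

lemma nuclearNorm_nonneg (A : Matrix m n ℝ) : 0 ≤ nuclearNorm A :=
  Finset.sum_nonneg fun _ _ => Real.sqrt_nonneg _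

lemma nuclearNorm_eq_sum_sqrt_roots (A : Matrix m n ℝ) :
    nuclearNorm A = ((Aᵀ * A).charpoly.roots.map Real.sqrt).sum := by
  rw [nuclearNorm, ← conjTranspose_eq_transpose_of_trivial,
    (isHermitian_conjTranspose_mul_self A).roots_charpoly_eq_eigenvalues, Multiset.map_map]
  exact Finset.sum_map_val _ _

lemma nuclearNorm_eq_of_transpose_mul_self_eq {m' : Type*} [Fintype m'] {A : Matrix m n ℝ}
    {B : Matrix m' n ℝ} (h : Aᵀ * A = Bᵀ * B) : nuclearNorm A = nuclearNorm B := by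
  rw [nuclearNorm_eq_sum_sqrt_roots, nuclearNorm_eq_sum_sqrt_roots, h]

open Polynomial in
/-- `Aᵀ A` and `A Aᵀ` have the same nonzero eigenvalues, and zero eigenvalues contribute
nothing to the nuclear norm. -/
lemma nuclearNorm_transpose [DecidableEq m] (A : Matrix m n ℝ) :
    nuclearNorm Aᵀ = nuclearNorm A := by
  have hroots := congrArg roots (charpoly_mul_comm' A Aᵀ)
  rw [roots_mul (mul_ne_zero (pow_ne_zero _ X_ne_zero) (charpoly_monic _).ne_zero),
    roots_mul (mul_ne_zero (pow_ne_zero _ X_ne_zero) (charpoly_monic _).ne_zero),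
    roots_X_pow, roots_X_pow] at hroots
  have hsum := congrArg (fun s => (s.map Real.sqrt).sum) hroots
  simp only [Multiset.map_add, Multiset.sum_add, Multiset.map_nsmul, Multiset.sum_nsmul,
    Multiset.map_singleton, Multiset.sum_singleton, Real.sqrt_zero, smul_zero, zero_add] at hsum
  rw [nuclearNorm_eq_sum_sqrt_roots, nuclearNorm_eq_sum_sqrt_roots, transpose_transpose, hsum]

lemma nuclearNorm_eq_of_mul_transpose_self_eq [DecidableEq m] {n' : Type*} [Fintype n']
    [DecidableEq n'] {A : Matrix m n ℝ} {B : Matrix m n' ℝ} (h : A * Aᵀ = B * Bᵀ) :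
    nuclearNorm A = nuclearNorm B := by
  rw [← nuclearNorm_transpose A, ← nuclearNorm_transpose B]
  exact nuclearNorm_eq_of_transpose_mul_self_eq (by simpa using h)

lemma exists_orthogonal_gram_eq_diagonal (C : Matrix m n ℝ) :
    ∃ U ∈ orthogonalGroup n ℝ, ∃ d : n → ℝ, (∀ i, 0 ≤ d i) ∧
      (C * U)ᵀ * (C * U) = diagonal d ∧ nuclearNorm C = ∑ i, √(d i) := by
  have hC := isHermitian_conjTranspose_mul_self C
  refine ⟨hC.eigenvectorUnitary, hC.eigenvectorUnitary.2, hC.eigenvalues,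
    eigenvalues_conjTranspose_mul_self_nonneg C, ?_, rfl⟩
  have h := hC.transpose_eigenvectorUnitary_mul_mul
  generalize (hC.eigenvectorUnitary : Matrix n n ℝ) = U at h ⊢
  generalize hC.eigenvalues = d at h ⊢
  rw [conjTranspose_eq_transpose_of_trivial] at h
  rw [transpose_mul, Matrix.mul_assoc, ← Matrix.mul_assoc Cᵀ, ← Matrix.mul_assoc, h]

lemma frobSq_le_nuclearNorm_sq (C : Matrix m n ℝ) : frobSq C ≤ nuclearNorm C ^ 2 := by
  obtain ⟨U, hU, d, hd, hgram, hnuc⟩ := exists_orthogonal_gram_eq_diagonal C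
  rw [← frobSq_mul_orthogonal C hU, frobSq_eq_trace_transpose_mul, hgram, trace_diagonal, hnuc]
  calc ∑ i, d i = ∑ i, √(d i) ^ 2 := Finset.sum_congr rfl fun i _ => (Real.sq_sqrt (hd i)).symm
    _ ≤ (∑ i, √(d i)) ^ 2 := Finset.sum_sq_le_sq_sum_of_nonneg fun i _ => Real.sqrt_nonneg _

lemma trace_le_nuclearNorm (C : Matrix n n ℝ) : C.trace ≤ nuclearNorm C := by
  obtain ⟨U, hU, d, -, hgram, hnuc⟩ := exists_orthogonal_gram_eq_diagonal C
  have htrace : C.trace = (Uᵀ * (C * U)).trace := by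
    rw [trace_mul_comm, Matrix.mul_assoc, (mem_orthogonalGroup_iff n ℝ).mp hU, Matrix.mul_one]
  rw [htrace, hnuc]
  refine Finset.sum_le_sum fun i _ => (transpose_mul_apply_self_le U (C * U) i).trans_eq ?_
  rw [(mem_orthogonalGroup_iff' n ℝ).mp hU, hgram]
  simp

lemma nuclearNorm_orthogonal_mul (C : Matrix n n ℝ) {Q : Matrix n n ℝ}
    (hQ : Q ∈ orthogonalGroup n ℝ) : nuclearNorm (Q * C) = nuclearNorm C := by
  apply nuclearNorm_eq_of_transpose_mul_self_eq
  rw [transpose_mul, Matrix.mul_assoc, ← Matrix.mul_assoc Qᵀ,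
    (mem_orthogonalGroup_iff' n ℝ).mp hQ, Matrix.one_mul]

lemma nuclearNorm_mul_orthogonal (C : Matrix n n ℝ) {Q : Matrix n n ℝ}
    (hQ : Q ∈ orthogonalGroup n ℝ) : nuclearNorm (C * Q) = nuclearNorm C := by
  rw [← nuclearNorm_transpose, transpose_mul,
    nuclearNorm_orthogonal_mul _ (transpose_mem_unitaryGroup_iff.mpr hQ), nuclearNorm_transpose]

lemma trace_orthogonal_mul_le_nuclearNorm (C : Matrix n n ℝ) {Q : Matrix n n ℝ}
    (hQ : Q ∈ orthogonalGroup n ℝ) : (Q * C).trace ≤ nuclearNorm C :=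
  (trace_le_nuclearNorm _).trans_eq (nuclearNorm_orthogonal_mul C hQ)

lemma sum_abs_diag_le_nuclearNorm (C : Matrix n n ℝ) : ∑ i, |C i i| ≤ nuclearNorm C := by
  let s : n → ℝ := fun i => if 0 ≤ C i i then 1 else -1
  have hs : diagonal s ∈ orthogonalGroup n ℝ := by
    rw [mem_orthogonalGroup_iff, diagonal_transpose, diagonal_mul_diagonal, ← diagonal_one]
    congr 1
    ext i
    by_cases h : 0 ≤ C i i <;> simp [s, h]
  refine le_of_eq_of_le ?_ (trace_orthogonal_mul_le_nuclearNorm C hs)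
  simp only [trace, diag, diagonal_mul]
  refine Finset.sum_congr rfl fun i _ => ?_
  by_cases h : 0 ≤ C i i
  · simp [s, h, abs_of_nonneg h]
  · simp [s, h, abs_of_neg (not_le.mp h)]

end NuclearNorm

section Polar

variable {n : Type*} [Fintype n] [DecidableEq n]

open RealInnerProductSpace in
lemma exists_orthogonal_transpose_mul_apply_self_eq_sqrt {B : Matrix n n ℝ} {d : n → ℝ}
    (hB : Bᵀ * B = diagonal d) :
    ∃ W ∈ orthogonalGroup n ℝ, ∀ j, (Wᵀ * B) j j = √(d j) := by
  let b : n → EuclideanSpace ℝ n := fun j => WithLp.toLp 2 (fun k => B k j)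
  have hinner : ∀ i j, ⟪b i, b j⟫ = diagonal d i j := by
    intro i j; rw [← hB]; simp [b, PiLp.inner_apply, mul_apply, mul_comm]
  have hd : ∀ i, 0 ≤ d i := fun i => by
    simpa only [hinner, diagonal_apply_eq] using real_inner_self_nonneg (x := b i)
  -- normalize the nonzero columns of `B` and extend them to an orthonormal basis
  let s : Set n := {j | d j ≠ 0}
  let v : n → EuclideanSpace ℝ n := fun j => (√(d j))⁻¹ • b j
  have hv : Orthonormal ℝ (s.domRestrict v) := by
    rw [orthonormal_iff_ite]
    rintro ⟨i, hi⟩ ⟨j, hj⟩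
    simp only [Set.domRestrict_apply, v, real_inner_smul_left, real_inner_smul_right, hinner,
      diagonal_apply, Subtype.mk.injEq]
    split_ifs with hij
    · subst hij
      rw [← mul_assoc, ← mul_inv, Real.mul_self_sqrt (hd i), inv_mul_cancel₀ hi]
    · simp
  obtain ⟨e, he⟩ := hv.exists_orthonormalBasis_extension_of_card_eq (by simp)
  let W := (EuclideanSpace.basisFun n ℝ).toBasis.toMatrix e
  refine ⟨W, OrthonormalBasis.toMatrix_orthonormalBasis_mem_orthogonal _ _, fun j => ?_⟩
  have hentry : (Wᵀ * B) j j = ⟪e j, b j⟫ := by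
    simp [W, Module.Basis.toMatrix_apply, mul_apply, PiLp.inner_apply, b, mul_comm]
  rw [hentry]
  by_cases hj : d j = 0
  · have hbj : b j = 0 := inner_self_eq_zero.mp ((hinner j j).trans (by simp [hj]))
    simp [hbj, hj]
  · rw [he j hj, real_inner_smul_left, hinner, diagonal_apply_eq, inv_mul_eq_div, Real.div_sqrt]

lemma exists_orthogonal_trace_mul_eq_nuclearNorm (C : Matrix n n ℝ) :
    ∃ Q ∈ orthogonalGroup n ℝ, (Q * C).trace = nuclearNorm C := by
  obtain ⟨U, hU, d, -, hgram, hnuc⟩ := exists_orthogonal_gram_eq_diagonal C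
  obtain ⟨W, hW, hdiag⟩ := exists_orthogonal_transpose_mul_apply_self_eq_sqrt hgram
  refine ⟨U * Wᵀ, mul_mem hU (transpose_mem_unitaryGroup_iff.mpr hW), ?_⟩
  rw [Matrix.mul_assoc, trace_mul_comm, Matrix.mul_assoc, hnuc]
  exact Finset.sum_congr rfl fun j _ => hdiag j

variable {m : Type*} [Fintype m]

lemma le_frobSq_sub_mul_orthogonal (A B : Matrix m n ℝ) {R : Matrix n n ℝ}
    (hR : R ∈ orthogonalGroup n ℝ) :
    frobSq A + frobSq B - 2 * nuclearNorm (Bᵀ * A) ≤ frobSq (A - B * R) := by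
  rw [frobSq_sub_mul_orthogonal A B hR]
  linarith [trace_orthogonal_mul_le_nuclearNorm (Bᵀ * A) (transpose_mem_unitaryGroup_iff.mpr hR)]

lemma exists_orthogonal_frobSq_sub_mul_eq (A B : Matrix m n ℝ) :
    ∃ R ∈ orthogonalGroup n ℝ,
      frobSq (A - B * R) = frobSq A + frobSq B - 2 * nuclearNorm (Bᵀ * A) := by
  obtain ⟨Q, hQ, hQtrace⟩ := exists_orthogonal_trace_mul_eq_nuclearNorm (Bᵀ * A)
  have hQt : Qᵀ ∈ orthogonalGroup n ℝ := transpose_mem_unitaryGroup_iff.mpr hQ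
  exact ⟨Qᵀ, hQt, by rw [frobSq_sub_mul_orthogonal A B hQt, transpose_transpose, hQtrace]⟩

end Polar

section PowersStormer

variable {n : Type*} [Fintype n] [DecidableEq n]

lemma frobSq_sub_le_nuclearNorm_mul_self_sub_of_sub_eq_diagonal {A B : Matrix n n ℝ}
    (hA : A.PosSemidef) (hB : B.PosSemidef) {μ : n → ℝ} (hAB : A - B = diagonal μ) :
    frobSq (A - B) ≤ nuclearNorm (A * A - B * B) := by
  have hdiag : ∀ i, (A * A - B * B) i i = μ i * (A i i + B i i) := fun i => by
    have h2 : 2 • (A * A - B * B) = (A - B) * (A + B) + (A + B) * (A - B) := by noncomm_ring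
    have hi := congrFun (congrFun h2 i) i
    rw [hAB] at hi
    simp only [Matrix.smul_apply, Matrix.add_apply, diagonal_mul, mul_diagonal, nsmul_eq_mul,
      Nat.cast_ofNat] at hi
    linarith
  have hμ : ∀ i, μ i = A i i - B i i := fun i => by
    simpa using (congrFun (congrFun hAB i) i).symm
  calc frobSq (A - B) = ∑ i, μ i ^ 2 := by
        rw [hAB, frobSq_eq_trace_mul_transpose, diagonal_transpose, diagonal_mul_diagonal,
          trace_diagonal]
        simp only [sq]
    _ ≤ ∑ i, |(A * A - B * B) i i| := Finset.sum_le_sum fun i _ => by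
        have hAi : 0 ≤ A i i := hA.diag_nonneg
        have hBi : 0 ≤ B i i := hB.diag_nonneg
        rw [hdiag, hμ, abs_mul, abs_of_nonneg (add_nonneg hAi hBi), sq, ← abs_mul_abs_self]
        exact mul_le_mul_of_nonneg_left (abs_sub_le_iff.mpr ⟨by linarith, by linarith⟩)
          (abs_nonneg _)
    _ ≤ nuclearNorm (A * A - B * B) := sum_abs_diag_le_nuclearNorm _

/-- **Powers–Størmer inequality**, reduced to the case where `A - B` is diagonal by conjugating
with an eigenbasis of `A - B`. -/
lemma frobSq_sub_le_nuclearNorm_mul_self_sub {A B : Matrix n n ℝ} (hA : A.PosSemidef)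
    (hB : B.PosSemidef) : frobSq (A - B) ≤ nuclearNorm (A * A - B * B) := by
  have hC := hA.1.sub hB.1
  set U : Matrix n n ℝ := (hC.eigenvectorUnitary : Matrix n n ℝ)
  have hU : U ∈ orthogonalGroup n ℝ := hC.eigenvectorUnitary.2
  have hUt : Uᵀ ∈ orthogonalGroup n ℝ := transpose_mem_unitaryGroup_iff.mpr hU
  have hUU : U * Uᵀ = 1 := (mem_orthogonalGroup_iff n ℝ).mp hU
  have key := frobSq_sub_le_nuclearNorm_mul_self_sub_of_sub_eq_diagonal
    (hA.conjTranspose_mul_mul_same U) (hB.conjTranspose_mul_mul_same U)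
    (μ := hC.eigenvalues) (by
      rw [conjTranspose_eq_transpose_of_trivial, ← Matrix.sub_mul, ← Matrix.mul_sub]
      exact hC.transpose_eigenvectorUnitary_mul_mul)
  simp only [conjTranspose_eq_transpose_of_trivial] at key
  have hsq : ∀ X : Matrix n n ℝ, Uᵀ * X * U * (Uᵀ * X * U) = Uᵀ * (X * X) * U := fun X => by
    rw [Matrix.mul_assoc, ← Matrix.mul_assoc U, ← Matrix.mul_assoc U, hUU, Matrix.one_mul]
    simp only [Matrix.mul_assoc]
  rwa [hsq, hsq, ← Matrix.sub_mul, ← Matrix.mul_sub, ← Matrix.sub_mul, ← Matrix.mul_sub,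
    nuclearNorm_mul_orthogonal _ hU, nuclearNorm_orthogonal_mul _ hUt,
    frobSq_mul_orthogonal _ hU, frobSq_orthogonal_mul _ hUt] at key

end PowersStormer

section Procrustes

variable {m n : Type*} [Fintype m] [Fintype n] [DecidableEq m]

lemma exists_posSemidef_mul_self_eq_mul_transpose (A : Matrix m n ℝ) :
    ∃ S : Matrix m m ℝ, S.PosSemidef ∧ S * S = A * Aᵀ := by
  open scoped MatrixOrder in
  have hK : 0 ≤ A * Aᵀ := by simpa using (posSemidef_self_mul_conjTranspose A).nonneg
  exact ⟨CFC.sqrt (A * Aᵀ), (CFC.sqrt_nonneg _).posSemidef, CFC.sqrt_mul_sqrt_self _ hK⟩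

lemma nuclearNorm_mul_transpose_sub_le (A Z : Matrix m n ℝ) :
    nuclearNorm (A * Aᵀ - Z * Zᵀ) ≤ √(frobSq (A + Z)) * √(frobSq (A - Z)) := by
  obtain ⟨Q, hQ, hQtrace⟩ := exists_orthogonal_trace_mul_eq_nuclearNorm (A * Aᵀ - Z * Zᵀ)
  have hsplit : (A + Z) * (A - Z)ᵀ + (A - Z) * (A + Z)ᵀ =
      (A * Aᵀ - Z * Zᵀ) + (A * Aᵀ - Z * Zᵀ) := by
    simp only [transpose_add, transpose_sub, Matrix.add_mul, Matrix.mul_add, Matrix.sub_mul,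
      Matrix.mul_sub]
    abel
  have h1 := trace_mul_transpose_le (Q * (A + Z)) (A - Z)
  have h2 := trace_mul_transpose_le (Q * (A - Z)) (A + Z)
  rw [frobSq_orthogonal_mul _ hQ, Matrix.mul_assoc] at h1 h2
  have htrace := congrArg (fun X => (Q * X).trace) hsplit
  simp only [Matrix.mul_add, trace_add] at htrace
  linarith

lemma trace_mul_le_nuclearNorm_transpose_mul [DecidableEq n] {A B : Matrix m n ℝ}
    {S T : Matrix m m ℝ} (hS : S.IsHermitian) (hT : T.IsHermitian) (hSS : S * S = A * Aᵀ)
    (hTT : T * T = B * Bᵀ) : (S * T).trace ≤ nuclearNorm (Bᵀ * A) := by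
  have hSt := transpose_eq_self_of_isHermitian hS
  have hTt := transpose_eq_self_of_isHermitian hT
  calc (S * T).trace = (T * S).trace := trace_mul_comm S T
    _ ≤ nuclearNorm (T * S) := trace_le_nuclearNorm _
    _ = nuclearNorm (T * A) := nuclearNorm_eq_of_mul_transpose_self_eq (by
        simp only [transpose_mul, hSt, hTt, Matrix.mul_assoc]
        rw [← Matrix.mul_assoc S, hSS, Matrix.mul_assoc])
    _ = nuclearNorm (Bᵀ * A) := nuclearNorm_eq_of_transpose_mul_self_eq (by
        simp only [transpose_mul, hTt, transpose_transpose, Matrix.mul_assoc]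
        rw [← Matrix.mul_assoc T, hTT, Matrix.mul_assoc])

end Procrustes

section ProcrustesDist

variable {M N : ℕ}

lemma procrustesDist_sq (A B : Matrix (Fin M) (Fin N) ℝ) :
    procrustesDist A B ^ 2 = frobSq A + frobSq B - 2 * nuclearNorm (Bᵀ * A) := by
  obtain ⟨R, hR, hRmin⟩ := exists_orthogonal_frobSq_sub_mul_eq A B
  have hleast : IsLeast {d : ℝ | ∃ R ∈ orthogonalGroup (Fin N) ℝ, d = √(frobSq (A - B * R))}
      √(frobSq (A - B * R)) := by
    refine ⟨⟨R, hR, rfl⟩, ?_⟩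
    rintro _ ⟨R', hR', rfl⟩
    exact Real.sqrt_le_sqrt (hRmin ▸ le_frobSq_sub_mul_orthogonal A B hR')
  rw [procrustesDist, hleast.csInf_eq, Real.sq_sqrt (frobSq_nonneg _), hRmin]

lemma procrustesDist_sq_le_nuclearNorm (A B : Matrix (Fin M) (Fin N) ℝ) :
    procrustesDist A B ^ 2 ≤ nuclearNorm (A * Aᵀ - B * Bᵀ) := by
  obtain ⟨S, hS, hSS⟩ := exists_posSemidef_mul_self_eq_mul_transpose A
  obtain ⟨T, hT, hTT⟩ := exists_posSemidef_mul_self_eq_mul_transpose B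
  have hpowers := frobSq_sub_le_nuclearNorm_mul_self_sub hS hT
  rw [frobSq_sub, frobSq_eq_of_mul_self_eq hS.1 hSS, frobSq_eq_of_mul_self_eq hT.1 hTT,
    transpose_eq_self_of_isHermitian hT.1, hSS, hTT] at hpowers
  rw [procrustesDist_sq]
  linarith [trace_mul_le_nuclearNorm_transpose_mul hS.1 hT.1 hSS hTT]

lemma nuclearNorm_sq_le_procrustesDist_sq_mul (A B : Matrix (Fin M) (Fin N) ℝ) :
    nuclearNorm (A * Aᵀ - B * Bᵀ) ^ 2 ≤ procrustesDist A B ^ 2 *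
      (2 * ((A * Aᵀ).trace + (B * Bᵀ).trace) - procrustesDist A B ^ 2) := by
  obtain ⟨R, hR, hRmin⟩ := exists_orthogonal_frobSq_sub_mul_eq A B
  have hsum : frobSq (A + B * R) = 2 * (frobSq A + frobSq B) - frobSq (A - B * R) := by
    rw [frobSq_add, frobSq_sub, frobSq_mul_orthogonal B hR]
    ring
  have h := nuclearNorm_mul_transpose_sub_le A (B * R)
  rw [mul_mul_transpose_orthogonal B hR] at h
  rw [procrustesDist_sq, ← hRmin, ← frobSq_eq_trace_mul_transpose,
    ← frobSq_eq_trace_mul_transpose]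
  calc nuclearNorm (A * Aᵀ - B * Bᵀ) ^ 2
      ≤ (√(frobSq (A + B * R)) * √(frobSq (A - B * R))) ^ 2 :=
        pow_le_pow_left₀ (nuclearNorm_nonneg _) h 2
    _ = _ := by
        rw [mul_pow, Real.sq_sqrt (frobSq_nonneg _), Real.sq_sqrt (frobSq_nonneg _), hsum]
        ring

end ProcrustesDist

/-- For `X̃, Ỹ ∈ ℝ^{M×N}` with kernel matrices `K_X = X̃ X̃ᵀ ≠ Ỹ Ỹᵀ = K_Y`,
`α = Tr K_X`, `β = Tr K_Y`, `D = ‖K_X − K_Y‖_F²` and participation ratio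
`R_Δ = ‖K_X − K_Y‖_*²/‖K_X − K_Y‖_F²`, the Procrustes distance `P = P(X̃, Ỹ)` satisfies
`(α + β) − √((α + β)² − R_Δ D) ≤ P² ≤ √(R_Δ D)`; equivalently,
`(1/R_Δ) P⁴ ≤ D ≤ (2(α + β) P² − P⁴)/R_Δ`. -/
theorem procrustes_decoding_distance_bounds
    {M N : ℕ} (Xt Yt : Matrix (Fin M) (Fin N) ℝ)
    (KX KY : Matrix (Fin M) (Fin M) ℝ)
    (hKX : KX = Xt * Xtᵀ) (hKY : KY = Yt * Ytᵀ) (hne : KX ≠ KY)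
    (α β D RΔ P : ℝ)
    (hα : α = KX.trace) (hβ : β = KY.trace)
    (hD : D = frobSq (KX - KY))
    (hRΔ : RΔ = nuclearNorm (KX - KY) ^ 2 / frobSq (KX - KY))
    (hP : P = procrustesDist Xt Yt) :
    ((α + β) - Real.sqrt ((α + β) ^ 2 - RΔ * D) ≤ P ^ 2 ∧
      P ^ 2 ≤ Real.sqrt (RΔ * D)) ∧
    ((1 / RΔ) * P ^ 4 ≤ D ∧ D ≤ (2 * (α + β) * P ^ 2 - P ^ 4) / RΔ) := by
  have hDpos : 0 < D := hD ▸ frobSq_pos (sub_ne_zero.mpr hne)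
  have hDle : D ≤ nuclearNorm (KX - KY) ^ 2 := hD ▸ frobSq_le_nuclearNorm_sq _
  have hupper : P ^ 2 ≤ nuclearNorm (KX - KY) := by
    subst hKX hKY hP; exact procrustesDist_sq_le_nuclearNorm Xt Yt
  have hlower : nuclearNorm (KX - KY) ^ 2 ≤ P ^ 2 * (2 * (α + β) - P ^ 2) := by
    subst hKX hKY hα hβ hP; exact nuclearNorm_sq_le_procrustesDist_sq_mul Xt Yt
  have hRΔD : RΔ * D = nuclearNorm (KX - KY) ^ 2 := by
    rw [hRΔ, ← hD, div_mul_cancel₀ _ hDpos.ne']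
  have hRΔpos : 0 < RΔ := by
    rw [hRΔ, ← hD]; exact div_pos (hDpos.trans_le hDle) hDpos
  refine ⟨⟨?_, ?_⟩, ?_, ?_⟩
  · have : α + β - P ^ 2 ≤ √((α + β) ^ 2 - RΔ * D) := Real.le_sqrt_of_sq_le (by nlinarith)
    linarith
  · rwa [hRΔD, Real.sqrt_sq (nuclearNorm_nonneg _)]
  · rw [one_div, inv_mul_le_iff₀ hRΔpos, hRΔD, show P ^ 4 = (P ^ 2) ^ 2 by ring]
    exact pow_le_pow_left₀ (sq_nonneg P) hupper 2
  · rw [le_div_iff₀ hRΔpos, mul_comm, hRΔD]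
    nlinarith
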